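/- arXiv:2309.04015 — 5 statements merged into one kernel-verified Lean document; each statement's English description precedes it below -/
import Mathlib

section
/- For t in [0,1), any P̃ in the co-simplex (∑_{ij} P̃_{ij}^{2-t} = 1) and any r̃, c̃ in the co-simplex of R^n, one has D_t(P̃ ‖ r̃ c̃^T) ≤ 1/(1-t). -/
noncomputable def tlog (t z : ℝ) : ℝ := (z ^ (1 - t) - 1) / (1 - t)

noncomputable def DtM {n : ℕ} (t : ℝ) (P V : Fin n → Fin n → ℝ) : ℝ :=
  ∑ i, ∑ j, (P i j * (tlog t (P i j) - tlog t (V i j))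
    - tlog (t - 1) (P i j) + tlog (t - 1) (V i j))

theorem stmt3 {n : ℕ} (t : ℝ) (ht0 : 0 ≤ t) (ht1 : t < 1)
    (P : Fin n → Fin n → ℝ) (hP : ∀ i j, 0 ≤ P i j)
    (hPsum : ∑ i, ∑ j, (P i j) ^ (2 - t) = 1)
    (r c : Fin n → ℝ) (hr : ∀ i, 0 ≤ r i) (hc : ∀ j, 0 ≤ c j)
    (hrsum : ∑ i, (r i) ^ (2 - t) = 1) (hcsum : ∑ j, (c j) ^ (2 - t) = 1) :
    DtM t P (fun i j => r i * c j) ≤ 1 / (1 - t) := by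
  have h1t : (0:ℝ) < 1 - t := by linarith
  have h2t : (0:ℝ) < 2 - t := by linarith
  set V : Fin n → Fin n → ℝ := fun i j => r i * c j with hV
  have hVnn : ∀ i j, 0 ≤ V i j := fun i j => mul_nonneg (hr i) (hc j)
  have key : ∀ i j, P i j * (tlog t (P i j) - tlog t (V i j))
      - tlog (t-1) (P i j) + tlog (t-1) (V i j)
      = ((P i j)^(2-t) - P i j * (V i j)^(1-t))/(1-t)
        + ((V i j)^(2-t) - (P i j)^(2-t))/(2-t) := by
    intro i j
    have hx : P i j * (P i j)^(1-t) = (P i j)^(2-t) := by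
      rcases (hP i j).eq_or_lt with h | h
      · rw [← h, Real.zero_rpow (by linarith : (1:ℝ)-t ≠ 0),
          Real.zero_rpow (by linarith : (2:ℝ)-t ≠ 0), mul_zero]
      · rw [show (2:ℝ)-t = 1 + (1-t) by ring, Real.rpow_add h, Real.rpow_one]
    simp only [tlog, show (1:ℝ) - (t - 1) = 2 - t by ring]
    rw [← hx]
    field_simp
    ring
  have hsum : DtM t P V =
      ((∑ i, ∑ j, (P i j)^(2-t)) - ∑ i, ∑ j, P i j * (V i j)^(1-t))/(1-t)
      + ((∑ i, ∑ j, (V i j)^(2-t)) - ∑ i, ∑ j, (P i j)^(2-t))/(2-t) := by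
    rw [DtM]
    simp_rw [key, Finset.sum_add_distrib, ← Finset.sum_div, Finset.sum_sub_distrib]
  have hVsum : ∑ i, ∑ j, (V i j)^(2-t) = 1 := by
    have : ∀ i j, (V i j)^(2-t) = (r i)^(2-t) * (c j)^(2-t) := fun i j =>
      Real.mul_rpow (hr i) (hc j)
    simp_rw [this, ← Finset.mul_sum, ← Finset.sum_mul, hrsum, hcsum, one_mul]
  have hS : 0 ≤ ∑ i, ∑ j, P i j * (V i j)^(1-t) :=
    Finset.sum_nonneg fun i _ => Finset.sum_nonneg fun j _ =>
      mul_nonneg (hP i j) (Real.rpow_nonneg (hVnn i j) _)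
  rw [hsum, hPsum, hVsum, sub_self, zero_div, add_zero]
  gcongr
  linarith
end

section
/- Let t ≤ 1, and M be a nonnegative symmetric n×n matrix satisfying the triangle inequality M_{ik} ≤ M_{ij} + M_{jk} and M_{ii} = 0. Then for all x̃, ỹ, z̃ in the co-simplex, (d̃^t_M(x̃,z̃))^{2-t} ≤ M^{1-t} · (d̃^t_M(x̃,ỹ) + d̃^t_M(ỹ,z̃)), where M = ∑_{ij} M_{ij} and d̃^t_M(x̃,ỹ) = min over P̃ ∈ Ũ_n(x̃,ỹ) of ⟨P̃, M⟩. -/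
/-- The co-polytope `Ũ_n(x̃,ỹ)` for parameter `t`. -/
def coPolytope {n : ℕ} (t : ℝ) (x y : Fin n → ℝ) (P : Fin n → Fin n → ℝ) : Prop :=
  (∀ i j, 0 ≤ P i j) ∧
  (∀ i, ∑ j, (P i j) ^ (2 - t) = (x i) ^ (2 - t)) ∧
  (∀ j, ∑ i, (P i j) ^ (2 - t) = (y j) ^ (2 - t))

/-- The measured optimal transport cost. -/
noncomputable def dMeas {n : ℕ} (t : ℝ) (M : Fin n → Fin n → ℝ) (x y : Fin n → ℝ) : ℝ :=
  sInf {v : ℝ | ∃ P : Fin n → Fin n → ℝ, coPolytope t x y P ∧ v = ∑ i, ∑ j, P i j * M i j}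

namespace Stmt6Aux

lemma cost_nonneg {n : ℕ} (M P : Fin n → Fin n → ℝ) (hM : ∀ i j, 0 ≤ M i j)
    (hP : ∀ i j, 0 ≤ P i j) : 0 ≤ ∑ i, ∑ j, P i j * M i j :=
  Finset.sum_nonneg fun i _ => Finset.sum_nonneg fun j _ => mul_nonneg (hP i j) (hM i j)

lemma prod_mem {n : ℕ} (t : ℝ) (x y : Fin n → ℝ) (hx : ∀ i, 0 ≤ x i) (hy : ∀ i, 0 ≤ y i)
    (hxs : ∑ i, (x i) ^ (2 - t) = 1) (hys : ∑ i, (y i) ^ (2 - t) = 1) :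
    coPolytope t x y (fun i j => x i * y j) := by
  refine ⟨fun i j => mul_nonneg (hx i) (hy j), fun i => ?_, fun j => ?_⟩
  · simp only [Real.mul_rpow (hx _) (hy _)]
    rw [← Finset.mul_sum, hys, mul_one]
  · simp only [Real.mul_rpow (hx _) (hy _)]
    rw [← Finset.sum_mul, hxs, one_mul]

lemma bddBelow_set {n : ℕ} (t : ℝ) (M : Fin n → Fin n → ℝ) (x y : Fin n → ℝ)
    (hM : ∀ i j, 0 ≤ M i j) :
    ∀ v ∈ {v : ℝ | ∃ P : Fin n → Fin n → ℝ,
      coPolytope t x y P ∧ v = ∑ i, ∑ j, P i j * M i j}, 0 ≤ v := by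
  rintro v ⟨P, hP, rfl⟩
  exact cost_nonneg M P hM hP.1

lemma dMeas_le {n : ℕ} {t : ℝ} {M : Fin n → Fin n → ℝ} {x y : Fin n → ℝ}
    {P : Fin n → Fin n → ℝ} (hM : ∀ i j, 0 ≤ M i j) (hP : coPolytope t x y P) :
    dMeas t M x y ≤ ∑ i, ∑ j, P i j * M i j :=
  csInf_le ⟨0, fun v hv => bddBelow_set t M x y hM v hv⟩ ⟨P, hP, rfl⟩

lemma dMeas_nonneg {n : ℕ} {t : ℝ} {M : Fin n → Fin n → ℝ} {x y : Fin n → ℝ}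
    (hM : ∀ i j, 0 ≤ M i j) : 0 ≤ dMeas t M x y :=
  Real.sInf_nonneg (bddBelow_set t M x y hM)

/-- If the base is at most `1` and the exponent at least `1`, rpow shrinks. -/
lemma rpow_le_self {b e : ℝ} (hb : 0 ≤ b) (hbe : b ^ e ≤ 1) (he : 1 ≤ e) : b ^ e ≤ b := by
  have he0 : (0:ℝ) < e := lt_of_lt_of_le one_pos he
  rcases eq_or_lt_of_le hb with h0 | hb0
  · rw [← h0, Real.zero_rpow he0.ne']
  have hb1 : b ≤ 1 := by
    by_contra h
    push_neg at h
    have := (Real.one_lt_rpow_iff_of_pos hb0 (y := e)).2 (Or.inl ⟨h, he0⟩)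
    linarith
  calc b ^ e ≤ b ^ (1:ℝ) := Real.rpow_le_rpow_of_exponent_ge hb0 hb1 he
    _ = b := Real.rpow_one b


lemma jensen2 {n : ℕ} (e : ℝ) (he : 1 ≤ e) (w R : Fin n → Fin n → ℝ)
    (hw : ∀ i j, 0 ≤ w i j) (hw1 : ∑ i, ∑ j, w i j = 1) (hR : ∀ i j, 0 ≤ R i j) :
    (∑ i, ∑ j, w i j * R i j) ^ e ≤ ∑ i, ∑ j, w i j * R i j ^ e := by
  have h := Real.rpow_arith_mean_le_arith_mean_rpow (Finset.univ : Finset (Fin n × Fin n))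
    (fun a => w a.1 a.2) (fun a => R a.1 a.2) (fun a _ => hw a.1 a.2)
    (by simpa [Fintype.sum_prod_type] using hw1) (fun a _ => hR a.1 a.2) he
  simpa [Fintype.sum_prod_type] using h

/-- The key gluing estimate, assuming the total mass of `M` is positive. -/
lemma key {n : ℕ} (t : ℝ) (ht : t ≤ 1) (M : Fin n → Fin n → ℝ)
    (hM0 : ∀ i j, 0 ≤ M i j)
    (hMtri : ∀ i j k, M i k ≤ M i j + M j k)
    (x y z : Fin n → ℝ)
    (hx : ∀ i, 0 ≤ x i) (hy : ∀ i, 0 ≤ y i) (hz : ∀ i, 0 ≤ z i)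
    (hxs : ∑ i, (x i) ^ (2 - t) = 1) (hys : ∑ i, (y i) ^ (2 - t) = 1)
    (hzs : ∑ i, (z i) ^ (2 - t) = 1)
    (P Q : Fin n → Fin n → ℝ) (hP : coPolytope t x y P) (hQ : coPolytope t y z Q)
    (hB : 0 < ∑ i, ∑ j, M i j) :
    (dMeas t M x z) ^ (2 - t) ≤
      (∑ i, ∑ j, M i j) ^ (1 - t) *
        ((∑ i, ∑ j, P i j * M i j) + (∑ i, ∑ j, Q i j * M i j)) := by
  have he1 : (1:ℝ) ≤ 2 - t := by linarith
  have he0 : (0:ℝ) < 2 - t := by linarith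
  set B := ∑ i, ∑ j, M i j with hBdef
  set p : Fin n → Fin n → ℝ := fun i j => P i j ^ (2 - t) with hpdef
  set q : Fin n → Fin n → ℝ := fun i j => Q i j ^ (2 - t) with hqdef
  have hp0 : ∀ i j, 0 ≤ p i j := fun i j => Real.rpow_nonneg (hP.1 i j) _
  have hq0 : ∀ i j, 0 ≤ q i j := fun i j => Real.rpow_nonneg (hQ.1 i j) _
  have hprow : ∀ i, ∑ j, p i j = x i ^ (2 - t) := hP.2.1
  have hpcol : ∀ j, ∑ i, p i j = y j ^ (2 - t) := hP.2.2
  have hqrow : ∀ j, ∑ k, q j k = y j ^ (2 - t) := hQ.2.1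
  have hqcol : ∀ k, ∑ j, q j k = z k ^ (2 - t) := hQ.2.2
  have hpy : ∀ j, y j ^ (2 - t) = 0 → ∀ i, p i j = 0 := by
    intro j hj i
    exact (Finset.sum_eq_zero_iff_of_nonneg (fun i _ => hp0 i j)).1
      ((hpcol j).trans hj) i (Finset.mem_univ i)
  have hqy : ∀ j, y j ^ (2 - t) = 0 → ∀ k, q j k = 0 := by
    intro j hj k
    exact (Finset.sum_eq_zero_iff_of_nonneg (fun k _ => hq0 j k)).1
      ((hqrow j).trans hj) k (Finset.mem_univ k)
  set r : Fin n → Fin n → ℝ := fun i k => ∑ j, p i j * q j k / (y j ^ (2 - t)) with hrdef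
  have hr0 : ∀ i k, 0 ≤ r i k := fun i k =>
    Finset.sum_nonneg fun j _ =>
      div_nonneg (mul_nonneg (hp0 i j) (hq0 j k)) (Real.rpow_nonneg (hy j) _)
  have hrrow : ∀ i, ∑ k, r i k = x i ^ (2 - t) := by
    intro i
    calc ∑ k, r i k = ∑ j, ∑ k, p i j * q j k / (y j ^ (2 - t)) := Finset.sum_comm
      _ = ∑ j, p i j := by
          refine Finset.sum_congr rfl fun j _ => ?_
          by_cases hj : y j ^ (2 - t) = 0
          · simp [hpy j hj i]
          · have : ∀ k, p i j * q j k / (y j ^ (2 - t)) =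
                q j k * (p i j / (y j ^ (2 - t))) := fun k => by ring
            rw [Finset.sum_congr rfl fun k _ => this k, ← Finset.sum_mul, hqrow j,
              mul_div_assoc']
            exact mul_div_cancel_left₀ _ hj
      _ = x i ^ (2 - t) := hprow i
  have hrcol : ∀ k, ∑ i, r i k = z k ^ (2 - t) := by
    intro k
    calc ∑ i, r i k = ∑ j, ∑ i, p i j * q j k / (y j ^ (2 - t)) := Finset.sum_comm
      _ = ∑ j, q j k := by
          refine Finset.sum_congr rfl fun j _ => ?_
          by_cases hj : y j ^ (2 - t) = 0
          · simp [hpy j hj, hqy j hj k]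
          · have : ∀ i, p i j * q j k / (y j ^ (2 - t)) =
                p i j * (q j k / (y j ^ (2 - t))) := fun i => by ring
            rw [Finset.sum_congr rfl fun i _ => this i, ← Finset.sum_mul, hpcol j]
            rw [mul_div_assoc']
            exact mul_div_cancel_left₀ _ hj
      _ = z k ^ (2 - t) := hqcol k
  set R : Fin n → Fin n → ℝ := fun i k => r i k ^ (2 - t)⁻¹ with hRdef
  have hR0 : ∀ i k, 0 ≤ R i k := fun i k => Real.rpow_nonneg (hr0 i k) _
  have hRe : ∀ i k, R i k ^ (2 - t) = r i k := by
    intro i k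
    rw [hRdef]
    rw [← Real.rpow_mul (hr0 i k), inv_mul_cancel₀ he0.ne', Real.rpow_one]
  have hcopR : coPolytope t x z R :=
    ⟨hR0, fun i => by simp only [hRe]; exact hrrow i,
      fun k => by simp only [hRe]; exact hrcol k⟩
  -- step 1 : d(x,z) ≤ cost of R
  have hdle : dMeas t M x z ≤ ∑ i, ∑ k, R i k * M i k := dMeas_le hM0 hcopR
  have hd0 : 0 ≤ dMeas t M x z := dMeas_nonneg hM0
  have step1 : (dMeas t M x z) ^ (2 - t) ≤ (∑ i, ∑ k, R i k * M i k) ^ (2 - t) :=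
    Real.rpow_le_rpow hd0 hdle he0.le
  -- step 2 : Jensen
  have hB1t : B ^ (1 - t) = B ^ (2 - t) / B := by
    rw [show (1 - t) = (2 - t) - 1 by ring, Real.rpow_sub hB, Real.rpow_one]
  have hw1 : ∑ i, ∑ k, M i k / B = 1 := by
    simp only [← Finset.sum_div]
    rw [← hBdef, div_self hB.ne']
  have hjensen := jensen2 (2 - t) he1 (fun i k => M i k / B) R
    (fun i k => div_nonneg (hM0 i k) hB.le) hw1 hR0
  have hS0 : 0 ≤ ∑ i, ∑ k, M i k / B * R i k :=
    Finset.sum_nonneg fun i _ => Finset.sum_nonneg fun k _ =>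
      mul_nonneg (div_nonneg (hM0 i k) hB.le) (hR0 i k)
  have hcostR : ∑ i, ∑ k, R i k * M i k = B * ∑ i, ∑ k, M i k / B * R i k := by
    rw [Finset.mul_sum]
    refine Finset.sum_congr rfl fun i _ => ?_
    rw [Finset.mul_sum]
    refine Finset.sum_congr rfl fun k _ => ?_
    field_simp
  have hA2 : ∑ i, ∑ k, M i k / B * R i k ^ (2 - t) =
      (∑ i, ∑ k, r i k * M i k) / B := by
    rw [Finset.sum_div]
    refine Finset.sum_congr rfl fun i _ => ?_
    rw [Finset.sum_div]
    refine Finset.sum_congr rfl fun k _ => ?_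
    rw [hRe i k]
    ring
  have step2 : (∑ i, ∑ k, R i k * M i k) ^ (2 - t) ≤
      B ^ (1 - t) * ∑ i, ∑ k, r i k * M i k := by
    calc (∑ i, ∑ k, R i k * M i k) ^ (2 - t)
        = (B * ∑ i, ∑ k, M i k / B * R i k) ^ (2 - t) := by rw [hcostR]
      _ = B ^ (2 - t) * (∑ i, ∑ k, M i k / B * R i k) ^ (2 - t) :=
          Real.mul_rpow hB.le hS0
      _ ≤ B ^ (2 - t) * ∑ i, ∑ k, M i k / B * R i k ^ (2 - t) :=
          mul_le_mul_of_nonneg_left hjensen (Real.rpow_nonneg hB.le _)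
      _ = B ^ (2 - t) * ((∑ i, ∑ k, r i k * M i k) / B) := by rw [hA2]
      _ = B ^ (1 - t) * ∑ i, ∑ k, r i k * M i k := by rw [hB1t]; ring
  -- step 3 : triangle inequality for the glued plan
  have step3 : ∑ i, ∑ k, r i k * M i k ≤
      (∑ i, ∑ j, p i j * M i j) + (∑ j, ∑ k, q j k * M j k) := by
    have hterm0 : ∀ i j k, 0 ≤ p i j * q j k / (y j ^ (2 - t)) := fun i j k =>
      div_nonneg (mul_nonneg (hp0 i j) (hq0 j k)) (Real.rpow_nonneg (hy j) _)
    calc ∑ i, ∑ k, r i k * M i k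
        = ∑ i, ∑ k, ∑ j, p i j * q j k / (y j ^ (2 - t)) * M i k := by
          refine Finset.sum_congr rfl fun i _ => Finset.sum_congr rfl fun k _ => ?_
          rw [hrdef, Finset.sum_mul]
      _ ≤ ∑ i, ∑ k, ∑ j, p i j * q j k / (y j ^ (2 - t)) * (M i j + M j k) := by
          refine Finset.sum_le_sum fun i _ => Finset.sum_le_sum fun k _ =>
            Finset.sum_le_sum fun j _ => ?_
          exact mul_le_mul_of_nonneg_left (hMtri i j k) (hterm0 i j k)
      _ = (∑ i, ∑ k, ∑ j, p i j * q j k / (y j ^ (2 - t)) * M i j)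
          + (∑ i, ∑ k, ∑ j, p i j * q j k / (y j ^ (2 - t)) * M j k) := by
          simp only [mul_add, Finset.sum_add_distrib]
      _ = (∑ i, ∑ j, p i j * M i j) + (∑ j, ∑ k, q j k * M j k) := by
          congr 1
          · refine Finset.sum_congr rfl fun i _ => ?_
            rw [Finset.sum_comm]
            refine Finset.sum_congr rfl fun j _ => ?_
            by_cases hj : y j ^ (2 - t) = 0
            · simp [hpy j hj i]
            · have : ∀ k, p i j * q j k / (y j ^ (2 - t)) * M i j =
                  q j k * (p i j * M i j / (y j ^ (2 - t))) := fun k => by ring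
              rw [Finset.sum_congr rfl fun k _ => this k, ← Finset.sum_mul, hqrow j,
                mul_div_assoc']
              exact mul_div_cancel_left₀ _ hj
          · calc ∑ i, ∑ k, ∑ j, p i j * q j k / (y j ^ (2 - t)) * M j k
                = ∑ k, ∑ i, ∑ j, p i j * q j k / (y j ^ (2 - t)) * M j k :=
                  Finset.sum_comm
              _ = ∑ k, ∑ j, ∑ i, p i j * q j k / (y j ^ (2 - t)) * M j k :=
                  Finset.sum_congr rfl fun k _ => Finset.sum_comm
              _ = ∑ k, ∑ j, q j k * M j k := by
                  refine Finset.sum_congr rfl fun k _ => Finset.sum_congr rfl fun j _ => ?_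
                  by_cases hj : y j ^ (2 - t) = 0
                  · simp [hpy j hj, hqy j hj k]
                  · have : ∀ i, p i j * q j k / (y j ^ (2 - t)) * M j k =
                        p i j * (q j k * M j k / (y j ^ (2 - t))) := fun i => by ring
                    rw [Finset.sum_congr rfl fun i _ => this i, ← Finset.sum_mul, hpcol j,
                      mul_div_assoc']
                    exact mul_div_cancel_left₀ _ hj
              _ = ∑ j, ∑ k, q j k * M j k := Finset.sum_comm
  -- step 4 : p ≤ P and q ≤ Q entrywise
  have hPle : ∀ i j, p i j ≤ P i j := by
    intro i j
    refine rpow_le_self (hP.1 i j) ?_ he1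
    calc P i j ^ (2 - t) ≤ ∑ j', P i j' ^ (2 - t) :=
          Finset.single_le_sum (fun j' _ => Real.rpow_nonneg (hP.1 i j') _) (Finset.mem_univ j)
      _ = x i ^ (2 - t) := hP.2.1 i
      _ ≤ ∑ i', x i' ^ (2 - t) :=
          Finset.single_le_sum (fun i' _ => Real.rpow_nonneg (hx i') _) (Finset.mem_univ i)
      _ = 1 := hxs
  have hQle : ∀ j k, q j k ≤ Q j k := by
    intro j k
    refine rpow_le_self (hQ.1 j k) ?_ he1
    calc Q j k ^ (2 - t) ≤ ∑ k', Q j k' ^ (2 - t) :=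
          Finset.single_le_sum (fun k' _ => Real.rpow_nonneg (hQ.1 j k') _) (Finset.mem_univ k)
      _ = y j ^ (2 - t) := hQ.2.1 j
      _ ≤ ∑ j', y j' ^ (2 - t) :=
          Finset.single_le_sum (fun j' _ => Real.rpow_nonneg (hy j') _) (Finset.mem_univ j)
      _ = 1 := hys
  have step4 : (∑ i, ∑ j, p i j * M i j) + (∑ j, ∑ k, q j k * M j k) ≤
      (∑ i, ∑ j, P i j * M i j) + (∑ i, ∑ j, Q i j * M i j) := by
    refine add_le_add ?_ ?_ <;>
      exact Finset.sum_le_sum fun i _ => Finset.sum_le_sum fun j _ =>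
        mul_le_mul_of_nonneg_right (by first | exact hPle i j | exact hQle i j) (hM0 i j)
  calc (dMeas t M x z) ^ (2 - t)
      ≤ (∑ i, ∑ k, R i k * M i k) ^ (2 - t) := step1
    _ ≤ B ^ (1 - t) * ∑ i, ∑ k, r i k * M i k := step2
    _ ≤ B ^ (1 - t) * ((∑ i, ∑ j, P i j * M i j) + (∑ i, ∑ j, Q i j * M i j)) :=
        mul_le_mul_of_nonneg_left (step3.trans step4) (Real.rpow_nonneg hB.le _)

end Stmt6Aux

open Stmt6Aux in
theorem stmt6 {n : ℕ} (t : ℝ) (ht : t ≤ 1) (M : Fin n → Fin n → ℝ)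
    (hM0 : ∀ i j, 0 ≤ M i j) (hMsym : ∀ i j, M i j = M j i)
    (hMtri : ∀ i j k, M i k ≤ M i j + M j k) (hMdiag : ∀ i, M i i = 0)
    (x y z : Fin n → ℝ)
    (hx : ∀ i, 0 ≤ x i) (hy : ∀ i, 0 ≤ y i) (hz : ∀ i, 0 ≤ z i)
    (hxs : ∑ i, (x i) ^ (2 - t) = 1) (hys : ∑ i, (y i) ^ (2 - t) = 1)
    (hzs : ∑ i, (z i) ^ (2 - t) = 1) :
    (dMeas t M x z) ^ (2 - t) ≤
      (∑ i, ∑ j, M i j) ^ (1 - t) * (dMeas t M x y + dMeas t M y z) := by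
  have he0 : (0:ℝ) < 2 - t := by linarith
  have hB0 : 0 ≤ ∑ i, ∑ j, M i j :=
    Finset.sum_nonneg fun i _ => Finset.sum_nonneg fun j _ => hM0 i j
  rcases eq_or_lt_of_le hB0 with hB | hB
  · -- total mass zero : all entries of M vanish
    have hMz : ∀ i j, M i j = 0 := by
      intro i j
      have h1 := (Finset.sum_eq_zero_iff_of_nonneg
        (fun i _ => Finset.sum_nonneg fun j _ => hM0 i j)).1 hB.symm i (Finset.mem_univ i)
      exact (Finset.sum_eq_zero_iff_of_nonneg (fun j _ => hM0 i j)).1 h1 j (Finset.mem_univ j)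
    have hcost : ∀ P : Fin n → Fin n → ℝ, ∑ i, ∑ j, P i j * M i j = 0 := by
      intro P
      refine Finset.sum_eq_zero fun i _ => Finset.sum_eq_zero fun j _ => ?_
      rw [hMz i j, mul_zero]
    have hdxz : dMeas t M x z = 0 :=
      le_antisymm (by simpa [hcost] using dMeas_le hM0 (prod_mem t x z hx hz hxs hzs))
        (dMeas_nonneg hM0)
    rw [hdxz, Real.zero_rpow he0.ne']
    exact mul_nonneg (Real.rpow_nonneg hB0 _)
      (add_nonneg (dMeas_nonneg hM0) (dMeas_nonneg hM0))
  · -- total mass positive : approximate the two infima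
    refine le_of_forall_pos_le_add fun ε hε => ?_
    set B := ∑ i, ∑ j, M i j with hBdef
    have hc : 0 < B ^ (1 - t) := Real.rpow_pos_of_pos hB _
    have hne1 : {v : ℝ | ∃ P : Fin n → Fin n → ℝ,
        coPolytope t x y P ∧ v = ∑ i, ∑ j, P i j * M i j}.Nonempty :=
      ⟨_, fun i j => x i * y j, prod_mem t x y hx hy hxs hys, rfl⟩
    have hne2 : {v : ℝ | ∃ P : Fin n → Fin n → ℝ,
        coPolytope t y z P ∧ v = ∑ i, ∑ j, P i j * M i j}.Nonempty :=
      ⟨_, fun i j => y i * z j, prod_mem t y z hy hz hys hzs, rfl⟩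
    have hδ : 0 < ε / (2 * B ^ (1 - t)) := by positivity
    obtain ⟨a, ⟨P, hPc, rfl⟩, hal⟩ := Real.lt_sInf_add_pos hne1 hδ
    obtain ⟨b, ⟨Q, hQc, rfl⟩, hbl⟩ := Real.lt_sInf_add_pos hne2 hδ
    have hkey := key t ht M hM0 hMtri x y z hx hy hz hxs hys hzs P Q hPc hQc hB
    have hdxy : dMeas t M x y = sInf {v : ℝ | ∃ P : Fin n → Fin n → ℝ,
        coPolytope t x y P ∧ v = ∑ i, ∑ j, P i j * M i j} := rfl
    have hdyz : dMeas t M y z = sInf {v : ℝ | ∃ P : Fin n → Fin n → ℝ,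
        coPolytope t y z P ∧ v = ∑ i, ∑ j, P i j * M i j} := rfl
    rw [← hdxy] at hal
    rw [← hdyz] at hbl
    have hδc : B ^ (1 - t) * (ε / (2 * B ^ (1 - t))) = ε / 2 := by
      field_simp
    nlinarith [hc, hkey, mul_le_mul_of_nonneg_left
      (add_le_add hal.le hbl.le) hc.le, hδc]
end

section
/- For t ∈ [0,1) and fixed δ > 0, the function g(z) = (z^{2-t} + δ)^{1/(2-t)} − z is convex on (0,∞). -/
theorem stmt9 (t δ : ℝ) (ht0 : 0 ≤ t) (ht1 : t < 1) (hδ : 0 < δ) :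
    ConvexOn ℝ (Set.Ioi (0 : ℝ))
      (fun z : ℝ => (z ^ (2 - t) + δ) ^ (1 / (2 - t)) - z) := by
  set p : ℝ := 2 - t with hpdef
  have hp1 : 1 ≤ p := by simp [hpdef]; linarith
  have hp0 : (0 : ℝ) < p := lt_of_lt_of_le one_pos hp1
  have hconv : ConvexOn ℝ (Set.Ioi (0 : ℝ)) (fun z : ℝ => (z ^ p + δ) ^ (1 / p)) := by
    refine ⟨convex_Ioi 0, ?_⟩
    intro x hx y hy a b ha hb hab
    simp only [smul_eq_mul]
    have hx' : (0:ℝ) < x := hx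
    have hy' : (0:ℝ) < y := hy
    set d : ℝ := δ ^ (1 / p) with hddef
    have hd0 : 0 ≤ d := Real.rpow_nonneg hδ.le _
    have hdp : d ^ p = δ := by
      rw [hddef, one_div, Real.rpow_inv_rpow hδ.le (ne_of_gt hp0)]
    have key := Real.Lp_add_le_of_nonneg (s := (Finset.univ : Finset (Fin 2)))
      (f := ![a * x, a * d]) (g := ![b * y, b * d]) hp1
      (by
        intro i _
        fin_cases i <;> simp <;> positivity)
      (by
        intro i _
        fin_cases i <;> simp <;> positivity)
    simp only [Fin.sum_univ_two, Matrix.cons_val_zero, Matrix.cons_val_one,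
      Matrix.head_cons] at key
    have habd : a * d + b * d = d := by rw [← add_mul, hab, one_mul]
    rw [habd, hdp] at key
    have hsplit : ∀ c z : ℝ, 0 ≤ c → 0 ≤ z →
        ((c * z) ^ p + (c * d) ^ p) ^ (1 / p) = c * (z ^ p + δ) ^ (1 / p) := by
      intro c z hc hz
      rw [Real.mul_rpow hc hz, Real.mul_rpow hc hd0, ← mul_add, hdp,
        Real.mul_rpow (Real.rpow_nonneg hc _) (by positivity), one_div,
        Real.rpow_rpow_inv hc (ne_of_gt hp0)]
    rw [hsplit a x ha hx'.le, hsplit b y hb hy'.le] at key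
    exact key
  have : (fun z : ℝ => (z ^ p + δ) ^ (1 / p) - z)
      = (fun z : ℝ => (z ^ p + δ) ^ (1 / p)) + (fun z : ℝ => -z) := by
    funext z; simp [sub_eq_add_neg]
  rw [show (fun z : ℝ => (z ^ (2 - t) + δ) ^ (1 / (2 - t)) - z)
      = (fun z : ℝ => (z ^ p + δ) ^ (1 / p) - z) from rfl, this]
  exact hconv.add ((concaveOn_id (convex_Ioi 0)).neg)
end

section
/- Let t ∈ [0,1), λ > 0, and suppose the optimal solution P̃ of the regularized measured cost problem satisfies the KKT stationarity conditions P̃_{ij}^{1-t} = (Π_{ij} − M'_{ij})/((2-t)(ν'_i + γ'_j)) with multipliers Π_{ij} ≥ 0 and complementary slackness Π_{ij} > 0 ⟹ P̃_{ij} = 0. Then for any coordinate (i,j) with M'_{ij} < 0, the entry P̃_{ij} is strictly positive. -/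
theorem stmt11 {n : ℕ} (t lam : ℝ) (ht0 : 0 ≤ t) (ht1 : t < 1) (hlam : 0 < lam)
    (P M' Pi : Fin n → Fin n → ℝ) (ν γ : Fin n → ℝ)
    (hP : ∀ i j, 0 ≤ P i j)
    (hden : ∀ i j, (2 - t) * (ν i + γ j) ≠ 0)
    (hstat : ∀ i j, (P i j) ^ (1 - t) = (Pi i j - M' i j) / ((2 - t) * (ν i + γ j)))
    (hPi : ∀ i j, 0 ≤ Pi i j)
    (hcs : ∀ i j, 0 < Pi i j → P i j = 0) :
    ∀ i j, M' i j < 0 → 0 < P i j := by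
  intro i j hM
  rcases lt_or_eq_of_le (hP i j) with h | h
  · exact h
  · exfalso
    have hz : (P i j) ^ (1 - t) = 0 := by
      rw [← h, Real.zero_rpow (by linarith)]
    have := hstat i j
    rw [hz, eq_comm, div_eq_zero_iff] at this
    rcases this with h1 | h1
    · have : Pi i j = M' i j := by linarith
      have := hPi i j
      linarith
    · exact hden i j h1
end

section
/- Under the KKT characterization P̃_{ab}^{1-t} = −M'_{ab}/((2-t)(ν'_a + γ'_b)) valid whenever P̃_{ab} > 0 (so Π_{ab}=0), with t ∈ [0,1): if i ≠ k, j ≠ l, M'_{ij} > 0, M'_{il} < 0, M'_{kj} < 0, and M'_{kl} > 0, then it is impossible that both P̃_{ij} > 0 and P̃_{kl} > 0. -/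
theorem stmt12 {n : ℕ} (t : ℝ) (ht0 : 0 ≤ t) (ht1 : t < 1)
    (P M' : Fin n → Fin n → ℝ) (ν γ : Fin n → ℝ)
    (hP : ∀ a b, 0 ≤ P a b)
    (hkkt : ∀ a b, 0 < P a b →
      (P a b) ^ (1 - t) * ((2 - t) * (ν a + γ b)) = -M' a b)
    (hneg : ∀ a b, M' a b < 0 → 0 < P a b)
    (i k : Fin n) (j l : Fin n) (hik : i ≠ k) (hjl : j ≠ l)
    (h1 : 0 < M' i j) (h2 : M' i l < 0) (h3 : M' k j < 0) (h4 : 0 < M' k l) :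
    ¬ (0 < P i j ∧ 0 < P k l) := by
  rintro ⟨hij, hkl⟩
  have h2t : (0:ℝ) < 2 - t := by linarith
  have key : ∀ a b, 0 < P a b →
      ((0 < M' a b → ν a + γ b < 0) ∧ (M' a b < 0 → 0 < ν a + γ b)) := by
    intro a b hab
    have hpow : (0:ℝ) < (P a b) ^ (1 - t) := Real.rpow_pos_of_pos hab _
    have hk := hkkt a b hab
    constructor
    · intro hM
      by_contra h
      push_neg at h
      nlinarith [mul_nonneg hpow.le (mul_nonneg h2t.le h)]
    · intro hM
      by_contra h
      push_neg at h
      nlinarith [mul_nonneg hpow.le (mul_nonneg h2t.le (neg_nonneg.mpr h))]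
  have A := (key i j hij).1 h1
  have B := (key i l (hneg i l h2)).2 h2
  have C := (key k j (hneg k j h3)).2 h3
  have D := (key k l hkl).1 h4
  linarith
end
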